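/- Let B and C be unital C*-algebras with C commutative, and let Ψ : B → C be a faithful central unital completely positive map (central means Ψ(ab) = Ψ(ba) for all a,b ∈ B). Then the multiplicative domain Mult(Ψ) = {v ∈ B : Ψ(v*v) = Ψ(v)*Ψ(v) and Ψ(vv*) = Ψ(v)Ψ(v)*} is a C*-subalgebra of the center of B. -/

import Mathlib

/-- A linear map between C*-algebras is completely positive if for each `n` the induced
map on `n × n` matrices is positive (positivity of a matrix over a C*-algebra meaning
being of the form `star w * w`). -/
def IsCPMap {B C : Type*} [CStarAlgebra B] [CStarAlgebra C] (Ψ : B →L[ℂ] C) : Prop :=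
  ∀ (n : ℕ) (v : Matrix (Fin n) (Fin n) B),
    ∃ w : Matrix (Fin n) (Fin n) C, (star v * v).map Ψ = star w * w

/-- The multiplicative domain of a map `Ψ`. -/
def MultDomain {B C : Type*} [CStarAlgebra B] [CStarAlgebra C] (Ψ : B →L[ℂ] C) : Set B :=
  {v : B | Ψ (star v * v) = star (Ψ v) * Ψ v ∧ Ψ (v * star v) = Ψ v * star (Ψ v)}

/-!
Composing `Ψ` with a character of the commutative algebra `C` gives a state `f` on `B`. By the
Cauchy–Schwarz inequality of the GNS inner product `⟪x, y⟫ = f (star x * y)`, `f (star x * x) = 0`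
forces `f (y * x) = 0` for all `y`; for `v` in the multiplicative domain this applies to
`x = v - f v • 1` and makes `f` multiplicative at `v`. As the characters separate the points of `C`,
`Ψ (a * v) = Ψ a * Ψ v = Ψ (v * a)`, so the multiplicative domain is the set of elements at which
`Ψ` is a bimodule map, evidently a ⋆-subalgebra. For such `v` the trace property gives
`Ψ ((v * b - b * v) * c) = 0` for all `c`, and faithfulness forces `v * b = b * v`.
-/

open scoped ComplexOrder
open WeakDual

namespace PositiveLinearMap

variable {A : Type*} [CStarAlgebra A] [PartialOrder A] [StarOrderedRing A] (f : A →ₚ[ℂ] ℂ)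

lemma apply_mul_eq_zero_of_apply_star_mul_self_eq_zero {x : A} (hx : f (star x * x) = 0)
    (y : A) : f (y * x) = 0 := by
  have hnorm : ‖f.toPreGNS x‖ = 0 := by
    have := f.preGNS_norm_sq (f.toPreGNS x)
    rw [ofPreGNS_toPreGNS, hx] at this
    exact_mod_cast pow_eq_zero_iff two_ne_zero |>.mp this
  have := norm_inner_le_norm (𝕜 := ℂ) (f.toPreGNS (star y)) (f.toPreGNS x)
  rw [hnorm, mul_zero, norm_le_zero_iff, preGNS_inner_def] at this
  simpa using this

lemma apply_mul_eq_mul_of_apply_star_mul_self (hf : f 1 = 1) {v : A}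
    (hv : f (star v * v) = star (f v) * f v) (y : A) : f (y * v) = f y * f v := by
  set x := v - f v • (1 : A)
  have hx : f (star x * x) = 0 := by
    simp only [x, star_sub, star_smul, star_one, sub_mul, mul_sub, smul_mul_assoc, mul_smul_comm,
      one_mul, mul_one, map_sub, map_smul, map_star, hv, hf, smul_eq_mul]
    ring
  have := f.apply_mul_eq_zero_of_apply_star_mul_self_eq_zero hx y
  rw [mul_sub, mul_smul_comm, mul_one, map_sub, map_smul, smul_eq_mul] at this
  linear_combination this

end PositiveLinearMap

lemma eq_of_forall_characterSpace_apply_eq {C : Type*} [CommCStarAlgebra C] {c d : C}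
    (h : ∀ φ : characterSpace ℂ C, φ c = φ d) : c = d :=
  (gelfandTransform_isometry C).injective <| ContinuousMap.ext h

lemma IsCPMap.map_nonneg {B C : Type*} [CStarAlgebra B] [PartialOrder B] [StarOrderedRing B]
    [CStarAlgebra C] [PartialOrder C] [StarOrderedRing C] {Ψ : B →L[ℂ] C} (hΨ : IsCPMap Ψ)
    {a : B} (ha : 0 ≤ a) : 0 ≤ Ψ a := by
  obtain ⟨b, rfl⟩ := CStarAlgebra.nonneg_iff_eq_star_mul_self.mp ha
  obtain ⟨w, hw⟩ := hΨ 1 (Matrix.of fun _ _ => b)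
  have hb : Ψ (star b * b) = star (w 0 0) * w 0 0 := by
    simpa [Matrix.mul_apply] using congrFun₂ hw 0 0
  exact hb ▸ star_mul_self_nonneg _

lemma isClosed_multDomain {B C : Type*} [CStarAlgebra B] [CStarAlgebra C] (Ψ : B →L[ℂ] C) :
    IsClosed (MultDomain Ψ) :=
  (isClosed_eq (by fun_prop) (by fun_prop)).inter (isClosed_eq (by fun_prop) (by fun_prop))

section Positive

variable {B C : Type*} [CStarAlgebra B] [PartialOrder B] [StarOrderedRing B]
  [CStarAlgebra C] [PartialOrder C] [StarOrderedRing C]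
  (Ψ : B →L[ℂ] C) (hpos : ∀ a, 0 ≤ a → 0 ≤ Ψ a)
include hpos

lemma map_star_of_map_nonneg (a : B) : Ψ (star a) = star (Ψ a) :=
  map_star (PositiveLinearMap.mk₀ (Ψ : B →ₗ[ℂ] C) hpos) a

lemma star_mem_multDomain {v : B} (hv : v ∈ MultDomain Ψ) : star v ∈ MultDomain Ψ := by
  simp only [MultDomain, Set.mem_ofPred_eq, star_star, map_star_of_map_nonneg Ψ hpos]
  exact hv.symm

end Positive

section CommutativeTarget

variable {B C : Type*} [CStarAlgebra B] [PartialOrder B] [StarOrderedRing B]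
  [CommCStarAlgebra C] [PartialOrder C] [StarOrderedRing C]
  (Ψ : B →L[ℂ] C) (hpos : ∀ a, 0 ≤ a → 0 ≤ Ψ a) (hunital : Ψ 1 = 1)
include hpos hunital

lemma map_mul_eq_of_map_star_mul_self {v : B} (hv : Ψ (star v * v) = star (Ψ v) * Ψ v) (a : B) :
    Ψ (a * v) = Ψ a * Ψ v := by
  refine eq_of_forall_characterSpace_apply_eq fun φ => ?_
  let f : B →ₚ[ℂ] ℂ :=
    (PositiveLinearMap.ofClass φ).comp (PositiveLinearMap.mk₀ (Ψ : B →ₗ[ℂ] C) hpos)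
  have hf : ∀ b, f b = φ (Ψ b) := fun _ => rfl
  have := f.apply_mul_eq_mul_of_apply_star_mul_self (by rw [hf, hunital, map_one])
    (by rw [hf, hf, hv, map_mul, map_star]) a
  rwa [hf, hf, hf, ← map_mul] at this

lemma mem_multDomain_iff {v : B} :
    v ∈ MultDomain Ψ ↔ ∀ a, Ψ (a * v) = Ψ a * Ψ v ∧ Ψ (v * a) = Ψ v * Ψ a := by
  have hstar := map_star_of_map_nonneg Ψ hpos
  refine ⟨fun hv a => ⟨map_mul_eq_of_map_star_mul_self Ψ hpos hunital hv.1 a, ?_⟩, fun hv => ?_⟩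
  · have := map_mul_eq_of_map_star_mul_self Ψ hpos hunital (star_mem_multDomain Ψ hpos hv).1
      (star a)
    rw [← star_mul, hstar, hstar, hstar, ← star_mul] at this
    exact star_injective this
  · exact ⟨by rw [(hv _).1, hstar], by rw [(hv _).2, hstar]⟩

def multDomainStarSubalgebra : StarSubalgebra ℂ B where
  carrier := MultDomain Ψ
  mul_mem' {x y} hx hy := by
    rw [mem_multDomain_iff Ψ hpos hunital] at hx hy ⊢
    intro a
    constructor
    · rw [← mul_assoc, (hy _).1, (hx _).1, (hy x).1, mul_assoc]
    · rw [mul_assoc, (hx _).2, (hy _).2, (hx y).2, mul_assoc]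
  add_mem' {x y} hx hy := by
    rw [mem_multDomain_iff Ψ hpos hunital] at hx hy ⊢
    intro a
    simp only [mul_add, add_mul, map_add, (hx a).1, (hy a).1, (hx a).2, (hy a).2, and_self]
  algebraMap_mem' c := by
    rw [mem_multDomain_iff Ψ hpos hunital, Algebra.algebraMap_eq_smul_one]
    intro a
    simp [hunital]
  star_mem' := star_mem_multDomain Ψ hpos

end CommutativeTarget

section Central

variable {B C : Type*} [Ring B] [Algebra ℂ B] [CommRing C] [Algebra ℂ C] (Ψ : B →ₗ[ℂ] C)
  (hcentral : ∀ a b : B, Ψ (a * b) = Ψ (b * a)) {v : B}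
  (hv : ∀ a, Ψ (a * v) = Ψ a * Ψ v ∧ Ψ (v * a) = Ψ v * Ψ a)
include hcentral hv

lemma map_commutator_mul_eq_zero (b c : B) : Ψ ((v * b - b * v) * c) = 0 := by
  have hvbc : Ψ (v * b * c) = Ψ v * Ψ (b * c) := by rw [mul_assoc, (hv _).2]
  have hbvc : Ψ (b * v * c) = Ψ (b * c) * Ψ v := by
    rw [hcentral, ← mul_assoc, (hv _).1, hcentral]
  rw [sub_mul, map_sub, hvbc, hbvc, mul_comm (Ψ v), sub_self]

lemma mem_center_of_map_mul [StarRing B] (hfaithful : ∀ b : B, Ψ (star b * b) = 0 → b = 0) :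
    v ∈ Set.center B := by
  refine Semigroup.mem_center_iff.mpr fun b => (sub_eq_zero.mp <| hfaithful _ ?_).symm
  rw [hcentral]
  exact map_commutator_mul_eq_zero Ψ hcentral hv b _

end Central

/-- (Kirchberg–Rørdam, Lemma 6.2, first part).  Let `B, C` be unital C*-algebras with `C`
commutative, and let `Ψ : B → C` be a faithful central unital completely positive map.
Then the multiplicative domain of `Ψ` is a (closed, hence C*-) *-subalgebra of `B`
contained in the center of `B`. -/
theorem multDomain_subalgebra_of_center
    {B C : Type*} [CStarAlgebra B] [CommCStarAlgebra C]
    (Ψ : B →L[ℂ] C) (hunital : Ψ 1 = 1) (hcp : IsCPMap Ψ)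
    (hfaithful : ∀ b : B, Ψ (star b * b) = 0 → b = 0)
    (hcentral : ∀ a b : B, Ψ (a * b) = Ψ (b * a)) :
    (∃ S : StarSubalgebra ℂ B, (S : Set B) = MultDomain Ψ) ∧
      IsClosed (MultDomain Ψ) ∧ MultDomain Ψ ⊆ Set.center B := by
  let _ := CStarAlgebra.spectralOrder B
  have _ := CStarAlgebra.spectralOrderedRing B
  let _ := CStarAlgebra.spectralOrder C
  have _ := CStarAlgebra.spectralOrderedRing C
  have hpos : ∀ a : B, 0 ≤ a → 0 ≤ Ψ a := fun _ => hcp.map_nonneg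
  refine ⟨⟨multDomainStarSubalgebra Ψ hpos hunital, rfl⟩, isClosed_multDomain Ψ, fun v hv => ?_⟩
  exact mem_center_of_map_mul (Ψ : B →ₗ[ℂ] C) hcentral
    ((mem_multDomain_iff Ψ hpos hunital).mp hv) hfaithful
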